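/- Let p ≥ 2, q ≥ 1, and a ≥ b be real numbers. With signed powers a^r := |a|^{r-1}a, one has (a^{(p+q-1)/p} - b^{(p+q-1)/p})^p ≤ ((p+q-1)^p / (p^p q)) · (a - b)^{p-1} · (a^q - b^q). -/

import Mathlib

/-!
Put `s = (p + q - 1) / p ≥ 1`. The signed power `t ↦ t^s` is an antiderivative of
`f t = s |t|^(s-1)`, and `f t ^ p = s^p |t|^(q-1)` is `s^p / q` times the derivative of
`t ↦ t^q`. Hölder's inequality against the constant `1` on `[b, a]`,
`(∫ f)^p ≤ (a - b)^(p-1) ∫ f^p`, is then exactly the claim, with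
`s^p / q = (p + q - 1)^p / (p^p q)`.
-/

open Real

/-- Signed power: `a^r := |a|^(r-1) * a`. -/
noncomputable def spow (a r : ℝ) : ℝ := |a| ^ (r - 1) * a

open Filter Topology MeasureTheory Set

lemma spow_neg (x r : ℝ) : spow (-x) r = -spow x r := by
  simp [spow]

lemma spow_of_pos {x : ℝ} (hx : 0 < x) (r : ℝ) : spow x r = x ^ r := by
  rw [spow, abs_of_pos hx, rpow_sub_one hx.ne', div_mul_cancel₀ _ hx.ne']

lemma hasDerivAt_spow_of_pos {t : ℝ} (ht : 0 < t) (r : ℝ) :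
    HasDerivAt (fun x => spow x r) (r * |t| ^ (r - 1)) t := by
  have hpow := hasDerivAt_rpow_const (p := r) (Or.inl ht.ne')
  rw [abs_of_pos ht]
  exact hpow.congr_of_eventuallyEq <|
    (eventually_gt_nhds ht).mono fun x hx => spow_of_pos hx r

lemma hasDerivAt_spow_zero {r : ℝ} (hr : 1 < r) :
    HasDerivAt (fun x => spow x r) (r * |0| ^ (r - 1)) 0 := by
  have hr0 : r - 1 ≠ 0 := by linarith
  rw [abs_zero, zero_rpow hr0, mul_zero, hasDerivAt_iff_isLittleO_nhds_zero]
  have hlim : Tendsto (fun h : ℝ => |h| ^ (r - 1)) (𝓝 0) (𝓝 0) := by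
    simpa [zero_rpow hr0] using
      (continuous_abs.rpow_const (p := r - 1) fun _ => Or.inr (by linarith)).tendsto 0
  simpa [spow, zero_rpow hr0] using
    ((Asymptotics.isLittleO_one_iff ℝ).mpr hlim).mul_isBigO (Asymptotics.isBigO_refl id (𝓝 0))

lemma hasDerivAt_spow {r : ℝ} (hr : 1 ≤ r) (t : ℝ) :
    HasDerivAt (fun x => spow x r) (r * |t| ^ (r - 1)) t := by
  rcases hr.eq_or_lt with rfl | hr
  · simpa [spow] using hasDerivAt_id' t
  rcases lt_trichotomy t 0 with ht | rfl | ht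
  · have hneg := ((hasDerivAt_spow_of_pos (neg_pos.mpr ht) r).scomp t (hasDerivAt_neg t)).neg
    simpa [Function.comp_def, spow_neg, Pi.neg_def] using hneg
  · exact hasDerivAt_spow_zero hr
  · exact hasDerivAt_spow_of_pos ht r

lemma integral_mul_abs_rpow_sub_one {r : ℝ} (hr : 1 ≤ r) (a b : ℝ) :
    ∫ t in a..b, r * |t| ^ (r - 1) = spow b r - spow a r := by
  have hcont : Continuous fun t : ℝ => r * |t| ^ (r - 1) :=
    continuous_const.mul (continuous_abs.rpow_const fun _ => Or.inr (by linarith))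
  exact intervalIntegral.integral_eq_sub_of_hasDerivAt (fun t _ => hasDerivAt_spow hr t)
    (hcont.intervalIntegrable _ _)

theorem rpow_intervalIntegral_le {f : ℝ → ℝ} {a b p : ℝ} (hp : 1 < p) (hab : a ≤ b)
    (hf : Continuous f) (hf0 : ∀ x, 0 ≤ f x) :
    (∫ x in a..b, f x) ^ p ≤ (b - a) ^ (p - 1) * ∫ x in a..b, f x ^ p := by
  simp only [intervalIntegral.integral_of_le hab]
  set μ := volume.restrict (Ioc a b)
  have : IsFiniteMeasure μ := isFiniteMeasure_restrict.mpr measure_Ioc_lt_top.ne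
  obtain ⟨C, hC⟩ := isCompact_Icc.exists_bound_of_continuousOn (hf.continuousOn (s := Icc a b))
  have hfLp : MemLp f (ENNReal.ofReal p) μ := MemLp.of_bound hf.aestronglyMeasurable C <|
    ae_restrict_of_forall_mem measurableSet_Ioc fun x hx => hC x (Ioc_subset_Icc_self hx)
  have hholder := integral_mul_le_Lp_mul_Lq_of_nonneg (Real.HolderConjugate.conjExponent hp)
    (ae_of_all _ hf0) (ae_of_all _ fun _ => zero_le_one) hfLp (memLp_const (1 : ℝ))
  have hvol : ∫ _, (1 : ℝ) ∂μ = b - a := by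
    simp [μ, hab]
  simp only [mul_one, one_rpow, hvol] at hholder
  have hba : 0 ≤ b - a := sub_nonneg.mpr hab
  have hJ : 0 ≤ ∫ x, f x ^ p ∂μ := integral_nonneg fun x => rpow_nonneg (hf0 x) p
  have hexp : 1 / p.conjExponent * p = p - 1 := by
    rw [Real.conjExponent]
    field_simp
  calc (∫ x, f x ∂μ) ^ p
      ≤ ((∫ x, f x ^ p ∂μ) ^ (1 / p) * (b - a) ^ (1 / p.conjExponent)) ^ p :=
        rpow_le_rpow (integral_nonneg hf0) hholder (by linarith)
    _ = (b - a) ^ (p - 1) * ∫ x, f x ^ p ∂μ := by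
        rw [mul_rpow (by positivity) (by positivity), ← rpow_mul hJ, ← rpow_mul hba, hexp,
          one_div_mul_cancel (by linarith), rpow_one, mul_comm]

theorem stmt5 (p q a b : ℝ) (hp : 2 ≤ p) (hq : 1 ≤ q) (hab : b ≤ a) :
    (spow a ((p + q - 1) / p) - spow b ((p + q - 1) / p)) ^ p ≤
      ((p + q - 1) ^ p / (p ^ p * q)) * (a - b) ^ (p - 1) * (spow a q - spow b q) := by
  have hp0 : 0 < p := by linarith
  set s := (p + q - 1) / p with hs_def
  have hs : 1 ≤ s := by rw [le_div_iff₀ hp0]; linarith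
  have hsp : (s - 1) * p = q - 1 := by rw [hs_def]; field_simp; ring
  have hG := integral_mul_abs_rpow_sub_one hs b a
  have hg : ∫ t in b..a, (s * |t| ^ (s - 1)) ^ p = s ^ p / q * (spow a q - spow b q) := by
    simp_rw [mul_rpow (by linarith : (0 : ℝ) ≤ s) (rpow_nonneg (abs_nonneg _) _),
      ← rpow_mul (abs_nonneg _), hsp, intervalIntegral.integral_const_mul,
      ← integral_mul_abs_rpow_sub_one hq b a, intervalIntegral.integral_const_mul]
    field_simp
  have hholder := rpow_intervalIntegral_le (f := fun t => s * |t| ^ (s - 1)) (p := p)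
    (by linarith) hab
    (continuous_const.mul (continuous_abs.rpow_const fun _ => Or.inr (by linarith)))
    (fun t => mul_nonneg (by linarith) (rpow_nonneg (abs_nonneg t) (s - 1)))
  rw [hG, hg] at hholder
  refine hholder.trans_eq ?_
  rw [hs_def, div_rpow (by linarith) hp0.le]
  field_simp
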